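/- Let X' ∈ ℝ^{n'×p}, y' ∈ ℝ^{n'}, and define the validation error E_v(β) = ‖y' − X'β‖₂. Let λ > 0 and μ > 0, suppose P_λ is μ-strongly convex (β ↦ P_λ(β) − (μ/2)‖β‖₂² is convex), and let β̂ be a minimizer of P_λ with P_λ(β̂) finite. Then for every β ∈ ℝ^p and θ ∈ ℝ^n with f*(−λθ) and Ω*(X^⊤θ) finite, |E_v(β̂) − E_v(β)| ≤ ‖X'‖ · √(2 Gap_λ(β, θ)/μ), where ‖X'‖ is the operator norm of X'. In particular, if ‖X'‖ > 0, ε_v ≥ 0 and Gap_λ(β, θ) ≤ (μ/2)(ε_v/‖X'‖)², then |E_v(β̂) − E_v(β)| ≤ ε_v. -/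

import Mathlib

open scoped RealInnerProductSpace

noncomputable section

abbrev Vec (d : ℕ) := EuclideanSpace ℝ (Fin d)

/-- Matrix–vector product, landing in Euclidean space. -/
def mv {a b : ℕ} (M : Matrix (Fin a) (Fin b) ℝ) (v : Vec b) : Vec a := WithLp.toLp 2 (M.mulVec v)

/-- Fenchel conjugate of a real-valued function, with values in `EReal`. -/
noncomputable def rconj {d : ℕ} (f : Vec d → ℝ) (u : Vec d) : EReal :=
  ⨆ x, ((⟪u, x⟫ - f x : ℝ) : EReal)

/-- Fenchel conjugate of an `EReal`-valued function. -/
noncomputable def econj {d : ℕ} (g : Vec d → EReal) (u : Vec d) : EReal :=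
  ⨆ x, (((⟪u, x⟫ : ℝ) : EReal) - g x)

/-- Primal objective `P_λ(β) = f(Xβ) + λ Ω(β)`, with values in `EReal`. -/
noncomputable def Pfun {n p : ℕ} (X : Matrix (Fin n) (Fin p) ℝ)
    (f : Vec n → ℝ) (Ω : Vec p → EReal) (lam : ℝ) (b : Vec p) : EReal :=
  ((f (mv X b) : ℝ) : EReal) + ((lam : ℝ) : EReal) * Ω b

/-- Convexity of an `EReal`-valued function, via convex-combination inequalities. -/
def ECvx {d : ℕ} (g : Vec d → EReal) : Prop :=
  ∀ b1 b2 : Vec d, ∀ t : ℝ, 0 ≤ t → t ≤ 1 →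
    g (t • b1 + (1 - t) • b2) ≤
      ((t : ℝ) : EReal) * g b1 + (((1 - t) : ℝ) : EReal) * g b2

/-- Operator norm of a matrix between Euclidean spaces. -/
noncomputable def opNorm {a b : ℕ} (M : Matrix (Fin a) (Fin b) ℝ) : ℝ :=
  ‖LinearMap.toContinuousLinearMap (Matrix.toEuclideanLin M)‖

/-! Strong convexity of `P_λ` together with the minimality of `β̂` gives
`(μ/2)‖β - β̂‖² ≤ P_λ(β) - P_λ(β̂)`, and weak duality (Fenchel–Young for `f` at `-λθ` and for `Ω`
at `Xᵀθ`) gives `-P_λ(β̂) ≤ f*(-λθ) + λΩ*(Xᵀθ)`. Adding the two, `‖β - β̂‖ ≤ √(2 Gap_λ(β, θ)/μ)`,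
and `E_v` is `‖X'‖`-Lipschitz. -/

open Set Filter Topology

lemma mv_eq_toEuclideanLin {a b : ℕ} (M : Matrix (Fin a) (Fin b) ℝ) (v : Vec b) :
    mv M v = Matrix.toEuclideanLin M v := rfl

lemma mv_sub {a b : ℕ} (M : Matrix (Fin a) (Fin b) ℝ) (v w : Vec b) :
    mv M v - mv M w = mv M (v - w) := by
  simp only [mv_eq_toEuclideanLin, map_sub]

lemma norm_mv_le {a b : ℕ} (M : Matrix (Fin a) (Fin b) ℝ) (v : Vec b) :
    ‖mv M v‖ ≤ opNorm M * ‖v‖ :=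
  (LinearMap.toContinuousLinearMap (Matrix.toEuclideanLin M)).le_opNorm v

lemma inner_mv_transpose {n p : ℕ} (X : Matrix (Fin n) (Fin p) ℝ) (θ : Vec n) (b : Vec p) :
    ⟪mv X.transpose θ, b⟫ = ⟪θ, mv X b⟫ := by
  rw [mv_eq_toEuclideanLin, mv_eq_toEuclideanLin, ← Matrix.conjTranspose_eq_transpose_of_trivial,
    Matrix.toEuclideanLin_conjTranspose_eq_adjoint, LinearMap.adjoint_inner_left]

lemma abs_norm_sub_mv_sub_le {a b : ℕ} (M : Matrix (Fin a) (Fin b) ℝ) (y : Vec a) (v w : Vec b) :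
    |‖y - mv M v‖ - ‖y - mv M w‖| ≤ opNorm M * ‖w - v‖ := by
  calc |‖y - mv M v‖ - ‖y - mv M w‖| ≤ ‖(y - mv M v) - (y - mv M w)‖ := abs_norm_sub_norm_le _ _
    _ = ‖mv M (w - v)‖ := by rw [sub_sub_sub_cancel_left, mv_sub]
    _ ≤ opNorm M * ‖w - v‖ := norm_mv_le M _

lemma norm_smul_add_one_sub_smul_sq {E : Type*} [NormedAddCommGroup E] [InnerProductSpace ℝ E]
    (a b : E) (t : ℝ) :
    ‖t • a + (1 - t) • b‖ ^ 2 = t * ‖a‖ ^ 2 + (1 - t) * ‖b‖ ^ 2 - t * (1 - t) * ‖a - b‖ ^ 2 := by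
  simp only [← real_inner_self_eq_norm_sq, inner_add_add_self, inner_sub_sub_self,
    real_inner_smul_left, real_inner_smul_right]
  ring

lemma le_of_forall_one_sub_mul_le {a b : ℝ} (h : ∀ t ∈ Ioo (0 : ℝ) 1, (1 - t) * a ≤ b) :
    a ≤ b := by
  have hlim : Tendsto (fun t : ℝ => (1 - t) * a) (𝓝[>] 0) (𝓝 a) := by
    refine tendsto_nhdsWithin_of_tendsto_nhds ?_
    have hcont : Continuous fun t : ℝ => (1 - t) * a := by fun_prop
    simpa using hcont.tendsto 0
  exact le_of_tendsto hlim (eventually_of_mem (Ioo_mem_nhdsGT zero_lt_one) h)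

section StrongConvexity

variable {d : ℕ} {g : Vec d → EReal} {μ : ℝ}

lemma ECvx.apply_smul_add_one_sub_smul_le (hsc : ECvx fun x => g x - ((μ / 2 * ‖x‖ ^ 2 : ℝ) : EReal))
    {b₁ b₂ : Vec d} {r₁ r₂ : ℝ} (h₁ : g b₁ = r₁) (h₂ : g b₂ = r₂) {t : ℝ} (ht₀ : 0 ≤ t)
    (ht₁ : t ≤ 1) :
    g (t • b₁ + (1 - t) • b₂) ≤
      ((t * r₁ + (1 - t) * r₂ - μ / 2 * t * (1 - t) * ‖b₁ - b₂‖ ^ 2 : ℝ) : EReal) := by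
  have h := hsc b₁ b₂ t ht₀ ht₁
  simp only [h₁, h₂, ← EReal.coe_sub, ← EReal.coe_mul, ← EReal.coe_add] at h
  have h' := (EReal.sub_le_iff_le_add (.inl (EReal.coe_ne_bot _)) (.inl (EReal.coe_ne_top _))).1 h
  rw [← EReal.coe_add, norm_smul_add_one_sub_smul_sq] at h'
  refine h'.trans_eq ?_
  congr 1
  ring

lemma ECvx.half_mul_sq_norm_sub_le (hsc : ECvx fun x => g x - ((μ / 2 * ‖x‖ ^ 2 : ℝ) : EReal))
    {b b₀ : Vec d} {r r₀ : ℝ} (hmin : ∀ x, g b₀ ≤ g x) (h₀ : g b₀ = r₀) (h : g b = r) :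
    μ / 2 * ‖b - b₀‖ ^ 2 ≤ r - r₀ := by
  -- compare `g b₀` with `g` at `t • b + (1 - t) • b₀`, divide by `t` and let `t → 0`
  refine le_of_forall_one_sub_mul_le fun t ⟨ht₀, ht₁⟩ => ?_
  have hcombo : (r₀ : EReal) ≤ _ :=
    h₀ ▸ (hmin _).trans (hsc.apply_smul_add_one_sub_smul_le h h₀ ht₀.le ht₁.le)
  have : r₀ ≤ t * r + (1 - t) * r₀ - μ / 2 * t * (1 - t) * ‖b - b₀‖ ^ 2 := by
    exact_mod_cast hcombo
  nlinarith

end StrongConvexity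

lemma inner_sub_le_of_rconj_eq {d : ℕ} {f : Vec d → ℝ} {u : Vec d} {s : ℝ}
    (h : rconj f u = s) (x : Vec d) : ⟪u, x⟫ - f x ≤ s := by
  have : ((⟪u, x⟫ - f x : ℝ) : EReal) ≤ s := h ▸ le_iSup (fun x => ((⟪u, x⟫ - f x : ℝ) : EReal)) x
  exact_mod_cast this

lemma inner_sub_le_of_econj_eq {d : ℕ} {g : Vec d → EReal} {u : Vec d} {s : ℝ}
    (h : econj g u = s) {x : Vec d} {w : ℝ} (hx : g x = w) : ⟪u, x⟫ - w ≤ s := by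
  have : ((⟪u, x⟫ : ℝ) : EReal) - g x ≤ s :=
    h ▸ le_iSup (fun x => ((⟪u, x⟫ : ℝ) : EReal) - g x) x
  rw [hx, ← EReal.coe_sub] at this
  exact_mod_cast this

lemma weak_duality {n p : ℕ} {X : Matrix (Fin n) (Fin p) ℝ} {f : Vec n → ℝ} {Ω : Vec p → EReal}
    {lam : ℝ} (hlam : 0 ≤ lam) {θ : Vec n} {fs Ωs : ℝ} (hfs : rconj f ((-lam) • θ) = fs)
    (hΩs : econj Ω (mv X.transpose θ) = Ωs) {b : Vec p} {w : ℝ} (hw : Ω b = w) :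
    0 ≤ f (mv X b) + lam * w + (fs + lam * Ωs) := by
  have hf := inner_sub_le_of_rconj_eq hfs (mv X b)
  have hΩ := inner_sub_le_of_econj_eq hΩs hw
  rw [real_inner_smul_left] at hf
  rw [inner_mv_transpose] at hΩ
  linarith [mul_le_mul_of_nonneg_left hΩ hlam]

namespace EReal

lemma coe_add_coe_mul_eq_top_iff {a c : ℝ} (hc : 0 < c) {x : EReal} :
    (a : EReal) + c * x = ⊤ ↔ x = ⊤ := by
  induction x using EReal.rec with
  | bot => simp [coe_mul_bot_of_pos hc]
  | coe r => simp [← coe_mul, ← coe_add]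
  | top => simp [coe_mul_top_of_pos hc]

end EReal

section Primal

variable {n p : ℕ} {X : Matrix (Fin n) (Fin p) ℝ} {f : Vec n → ℝ} {Ω : Vec p → EReal} {lam : ℝ}

lemma Pfun_eq_coe {b : Vec p} {w : ℝ} (hw : Ω b = w) :
    Pfun X f Ω lam b = ((f (mv X b) + lam * w : ℝ) : EReal) := by
  rw [Pfun, hw, EReal.coe_add, EReal.coe_mul]

lemma ne_top_of_Pfun_eq_coe (hlam : 0 < lam) {b : Vec p} {r : ℝ} (h : Pfun X f Ω lam b = r) :
    Ω b ≠ ⊤ := fun htop => by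
  rw [Pfun, (EReal.coe_add_coe_mul_eq_top_iff hlam).2 htop] at h
  exact EReal.coe_ne_top r h.symm

lemma ne_bot_of_Pfun_min (hlam : 0 < lam) {b₀ : Vec p} {r₀ : ℝ} (h₀ : Pfun X f Ω lam b₀ = r₀)
    (hmin : ∀ b, Pfun X f Ω lam b₀ ≤ Pfun X f Ω lam b) (b : Vec p) : Ω b ≠ ⊥ := fun hbot => by
  have h := hmin b
  rw [h₀, Pfun, hbot, EReal.coe_mul_bot_of_pos hlam, EReal.add_bot, le_bot_iff] at h
  exact EReal.coe_ne_bot r₀ h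

end Primal

lemma half_mul_sq_norm_sub_le_of_gap_le {n p : ℕ} {X : Matrix (Fin n) (Fin p) ℝ} {f : Vec n → ℝ}
    {Ω : Vec p → EReal} {lam μ : ℝ} (hlam : 0 < lam)
    (hsc : ECvx fun b : Vec p => Pfun X f Ω lam b - ((μ / 2 * ‖b‖ ^ 2 : ℝ) : EReal))
    {bhat : Vec p} (hmin : ∀ b, Pfun X f Ω lam bhat ≤ Pfun X f Ω lam b) {r₀ : ℝ}
    (h₀ : Pfun X f Ω lam bhat = r₀) {β : Vec p} {θ : Vec n} {fs Ωs G : ℝ}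
    (hfs : rconj f ((-lam) • θ) = fs) (hΩs : econj Ω (mv X.transpose θ) = Ωs)
    (hgap : ((f (mv X β) : ℝ) : EReal) + ((fs : ℝ) : EReal)
      + ((lam : ℝ) : EReal) * (Ω β + ((Ωs : ℝ) : EReal)) ≤ (G : EReal)) :
    μ / 2 * ‖β - bhat‖ ^ 2 ≤ G := by
  have hbot := ne_bot_of_Pfun_min hlam h₀ hmin
  have hw₀ := (EReal.coe_toReal (ne_top_of_Pfun_eq_coe hlam h₀) (hbot bhat)).symm
  have htop : Ω β ≠ ⊤ := fun htop => by
    simp [htop, EReal.coe_mul_top_of_pos hlam] at hgap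
  have hw := (EReal.coe_toReal htop (hbot β)).symm
  have hstrong := hsc.half_mul_sq_norm_sub_le hmin h₀ (Pfun_eq_coe hw)
  have hdual := weak_duality hlam.le hfs hΩs hw₀
  have hgap' : f (mv X β) + fs + lam * ((Ω β).toReal + Ωs) ≤ G := by
    rw [hw] at hgap
    exact_mod_cast hgap
  rw [Pfun_eq_coe hw₀] at h₀
  have hr₀ : r₀ = f (mv X bhat) + lam * (Ω bhat).toReal := by exact_mod_cast h₀.symm
  linarith

lemma le_sqrt_of_half_mul_sq_le {x G μ : ℝ} (hμ : 0 < μ) (h : μ / 2 * x ^ 2 ≤ G) :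
    x ≤ Real.sqrt (2 * G / μ) :=
  Real.le_sqrt_of_sq_le (by rw [le_div_iff₀ hμ]; linarith)

theorem stmt16_general {n p n' : ℕ} (X : Matrix (Fin n) (Fin p) ℝ)
    (X' : Matrix (Fin n') (Fin p) ℝ) (y' : Vec n')
    (f : Vec n → ℝ)
    (Ω : Vec p → EReal)
    (lam μ : ℝ) (hlam : 0 < lam) (hμ : 0 < μ)
    (hsc : ECvx fun b : Vec p =>
      Pfun X f Ω lam b - ((μ / 2 * ‖b‖ ^ 2 : ℝ) : EReal))
    (bhat : Vec p)
    (hmin : ∀ b, Pfun X f Ω lam bhat ≤ Pfun X f Ω lam b)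
    (hfin : ∃ r : ℝ, Pfun X f Ω lam bhat = (r : EReal))
    (Ev : Vec p → ℝ) (hEv : ∀ b, Ev b = ‖y' - mv X' b‖) :
    ∀ (β : Vec p) (θ : Vec n) (fs Ωs : ℝ),
      rconj f ((-lam) • θ) = (fs : EReal) →
      econj Ω (mv X.transpose θ) = (Ωs : EReal) →
      ((∀ G : ℝ,
        ((f (mv X β) : ℝ) : EReal) + ((fs : ℝ) : EReal)
            + ((lam : ℝ) : EReal) * (Ω β + ((Ωs : ℝ) : EReal)) = (G : EReal) →
        |Ev bhat - Ev β| ≤ opNorm X' * Real.sqrt (2 * G / μ)) ∧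
      (∀ εv : ℝ, 0 ≤ εv → 0 < opNorm X' →
        ((f (mv X β) : ℝ) : EReal) + ((fs : ℝ) : EReal)
            + ((lam : ℝ) : EReal) * (Ω β + ((Ωs : ℝ) : EReal))
          ≤ ((μ / 2 * (εv / opNorm X') ^ 2 : ℝ) : EReal) →
        |Ev bhat - Ev β| ≤ εv)) := by
  intro β θ fs Ωs hfs hΩs
  obtain ⟨r₀, h₀⟩ := hfin
  have hbound : ∀ G : ℝ, _ ≤ (G : EReal) → |Ev bhat - Ev β| ≤ opNorm X' * Real.sqrt (2 * G / μ) :=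
    fun G hgap => calc
      |Ev bhat - Ev β| ≤ opNorm X' * ‖β - bhat‖ := by
        rw [hEv, hEv]; exact abs_norm_sub_mv_sub_le X' y' bhat β
      _ ≤ opNorm X' * Real.sqrt (2 * G / μ) := by
        gcongr
        · exact norm_nonneg _
        · exact le_sqrt_of_half_mul_sq_le hμ
            (half_mul_sq_norm_sub_le_of_gap_le hlam hsc hmin h₀ hfs hΩs hgap)
  refine ⟨fun G hG => hbound G hG.le, fun εv hεv hX' hgap => (hbound _ hgap).trans_eq ?_⟩
  rw [show 2 * (μ / 2 * (εv / opNorm X') ^ 2) / μ = (εv / opNorm X') ^ 2 by field_simp,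
    Real.sqrt_sq (div_nonneg hεv hX'.le)]
  field_simp

/-- safe bound on the regression validation error.
`E_v(β) = ‖y' - X'β‖₂`, `P_λ` is `μ`-strongly convex with minimizer `β̂` (finite
optimal value).  For dual feasible `θ` (the conjugates `fs`, `Ωs` finite), whenever
the duality gap `Gap_λ(β,θ)` equals a real `G`,
`|E_v(β̂) - E_v(β)| ≤ ‖X'‖ √(2G/μ)`; and if `‖X'‖ > 0`, `ε_v ≥ 0` and
`Gap_λ(β,θ) ≤ (μ/2)(ε_v/‖X'‖)²`, then `|E_v(β̂) - E_v(β)| ≤ ε_v`. -/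
theorem stmt16 {n p n' : ℕ} (X : Matrix (Fin n) (Fin p) ℝ)
    (X' : Matrix (Fin n') (Fin p) ℝ) (y' : Vec n')
    (f : Vec n → ℝ) (hconv : ConvexOn ℝ Set.univ f)
    (Ω : Vec p → EReal)
    (lam μ : ℝ) (hlam : 0 < lam) (hμ : 0 < μ)
    (hsc : ECvx fun b : Vec p =>
      Pfun X f Ω lam b - ((μ / 2 * ‖b‖ ^ 2 : ℝ) : EReal))
    (bhat : Vec p)
    (hmin : ∀ b, Pfun X f Ω lam bhat ≤ Pfun X f Ω lam b)
    (hfin : ∃ r : ℝ, Pfun X f Ω lam bhat = (r : EReal))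
    (Ev : Vec p → ℝ) (hEv : ∀ b, Ev b = ‖y' - mv X' b‖) :
    ∀ (β : Vec p) (θ : Vec n) (fs Ωs : ℝ),
      rconj f ((-lam) • θ) = (fs : EReal) →
      econj Ω (mv X.transpose θ) = (Ωs : EReal) →
      ((∀ G : ℝ,
        ((f (mv X β) : ℝ) : EReal) + ((fs : ℝ) : EReal)
            + ((lam : ℝ) : EReal) * (Ω β + ((Ωs : ℝ) : EReal)) = (G : EReal) →
        |Ev bhat - Ev β| ≤ opNorm X' * Real.sqrt (2 * G / μ)) ∧
      (∀ εv : ℝ, 0 ≤ εv → 0 < opNorm X' →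
        ((f (mv X β) : ℝ) : EReal) + ((fs : ℝ) : EReal)
            + ((lam : ℝ) : EReal) * (Ω β + ((Ωs : ℝ) : EReal))
          ≤ ((μ / 2 * (εv / opNorm X') ^ 2 : ℝ) : EReal) →
        |Ev bhat - Ev β| ≤ εv)) :=
  stmt16_general X X' y' f Ω lam μ hlam hμ hsc bhat hmin hfin Ev hEv
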